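/- Suppose for each p there are an invertible symmetry γ_p (with γ_p(ξ(x₀,p,t)) = ξ(γ_p(x₀), p_v, t)) mapping mode p to the virtual mode p_v. Fix K' ⊆ ℝⁿ, T' ≥ 0, U' ⊆ ℝⁿ with Reach(K', p_v, [0,T']) ∩ U' = ∅ (a cached safe result). Then for any mode p ∈ P, any initial set K ⊆ ℝⁿ, any time bound 0 ≤ T ≤ T', and any unsafe set U ⊆ ℝⁿ, if K ⊆ γ_p⁻¹(K') and U ⊆ γ_p⁻¹(U'), then Reach(K, p, [0,T]) ∩ U = ∅. -/

import Mathlib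

/-!
A symmetry `γ` carrying mode `p` to the virtual mode `p_v` maps every trajectory of `p` onto a
trajectory of `p_v`, so it maps `Reach K p [0,T]` into `Reach K' p_v [0,T']` and `U` into `U'`.
A state of `Reach K p [0,T] ∩ U` would therefore be sent into the cached set
`Reach K' p_v [0,T'] ∩ U' = ∅`.
-/

/-- Reachable states over a time interval `[a, b]` of the flow `ξ` with parameter `p`. -/
def Reach {n : ℕ} {P : Type*} (ξ : (Fin n → ℝ) → P → ℝ → (Fin n → ℝ))
    (K : Set (Fin n → ℝ)) (p : P) (a b : ℝ) : Set (Fin n → ℝ) :=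
  {x | ∃ x₀ ∈ K, ∃ t ∈ Set.Icc a b, x = ξ x₀ p t}

section Reach

open Set

variable {n : ℕ} {P : Type*} {ξ : (Fin n → ℝ) → P → ℝ → (Fin n → ℝ)}

theorem Reach_mono {K K' : Set (Fin n → ℝ)} {p : P} {a b b' : ℝ} (hK : K ⊆ K') (hb : b ≤ b') :
    Reach ξ K p a b ⊆ Reach ξ K' p a b' := by
  rintro _ ⟨x₀, hx₀, t, ⟨hat, htb⟩, rfl⟩
  exact ⟨x₀, hK hx₀, t, ⟨hat, htb.trans hb⟩, rfl⟩

theorem mapsTo_Reach {γ : (Fin n → ℝ) → Fin n → ℝ} {K K' : Set (Fin n → ℝ)} {p q : P} {a b : ℝ}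
    (hγ : ∀ x₀ ∈ K, ∀ t ∈ Icc a b, γ (ξ x₀ p t) = ξ (γ x₀) q t) (hK : MapsTo γ K K') :
    MapsTo γ (Reach ξ K p a b) (Reach ξ K' q a b) := by
  rintro _ ⟨x₀, hx₀, t, ht, rfl⟩
  exact ⟨γ x₀, hK hx₀, t, ht, hγ x₀ hx₀ t ht⟩

end Reach

theorem stmt_10_general {n : ℕ} {P : Type*}
    (ξ : (Fin n → ℝ) → P → ℝ → (Fin n → ℝ))
    (p_v : P)
    (γ : P → (Fin n → ℝ) ≃ (Fin n → ℝ))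
    (hsym : ∀ (p : P) (x₀ : Fin n → ℝ) (t : ℝ), 0 ≤ t →
      γ p (ξ x₀ p t) = ξ (γ p x₀) p_v t)
    (K' U' : Set (Fin n → ℝ)) (T' : ℝ)
    (hcache : Reach ξ K' p_v 0 T' ∩ U' = ∅) :
    ∀ (p : P) (K U : Set (Fin n → ℝ)) (T : ℝ), 0 ≤ T → T ≤ T' →
      K ⊆ (γ p).symm '' K' → U ⊆ (γ p).symm '' U' →
      Reach ξ K p 0 T ∩ U = ∅ := by
  intro p K U T _ hTT' hK hU
  rw [Equiv.image_symm_eq_preimage] at hK hU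
  have hReach : Reach ξ K p 0 T ⊆ γ p ⁻¹' Reach ξ K' p_v 0 T' :=
    (mapsTo_Reach (fun x₀ _ t ht ↦ hsym p x₀ t ht.1) hK).mono_right (Reach_mono le_rfl hTT')
  refine Set.eq_empty_of_subset_empty ?_
  calc Reach ξ K p 0 T ∩ U ⊆ γ p ⁻¹' (Reach ξ K' p_v 0 T' ∩ U') := Set.inter_subset_inter hReach hU
    _ = ∅ := by rw [hcache, Set.preimage_empty]

/-- Unbounded safety from a cached virtual-system check. Given invertible
symmetries `γ_p` mapping mode `p` to virtual mode `p_v`, and a cached safe result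
`Reach K' p_v [0,T'] ∩ U' = ∅`, then for any mode `p`, initial set `K ⊆ γ_p⁻¹(K')`,
time bound `0 ≤ T ≤ T'`, and unsafe set `U ⊆ γ_p⁻¹(U')`, we have `Reach K p [0,T] ∩ U = ∅`. -/
theorem stmt_10 {n : ℕ} {P : Type*}
    (ξ : (Fin n → ℝ) → P → ℝ → (Fin n → ℝ))
    (p_v : P)
    (γ : P → (Fin n → ℝ) ≃ (Fin n → ℝ))
    (hsym : ∀ (p : P) (x₀ : Fin n → ℝ) (t : ℝ), 0 ≤ t →
      γ p (ξ x₀ p t) = ξ (γ p x₀) p_v t)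
    (K' U' : Set (Fin n → ℝ)) (T' : ℝ) (hT' : 0 ≤ T')
    (hcache : Reach ξ K' p_v 0 T' ∩ U' = ∅) :
    ∀ (p : P) (K U : Set (Fin n → ℝ)) (T : ℝ), 0 ≤ T → T ≤ T' →
      K ⊆ (γ p).symm '' K' → U ⊆ (γ p).symm '' U' →
      Reach ξ K p 0 T ∩ U = ∅ :=
  stmt_10_general ξ p_v γ hsym K' U' T' hcache
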